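/- Let z ≥ 1 and let p be a partition in the image of d_com^{(z)} (i.e. p = d_com^{(z)}(q) for some partition q). Then for every partition p' of the same integer with p' > p in dominance order, one has d_com^{(z)}(p') < d_com^{(z)}(p) strictly in dominance order. -/

import Mathlib

namespace PartStmt

/-- Sorted (nonincreasing) list of parts of a partition, represented as a multiset. -/
def parts (m : Multiset ℕ) : List ℕ := (m.sort (· ≤ ·)).reverse

/-- The `i`-th part (0-indexed), with `0` beyond the length. -/
def part (m : Multiset ℕ) (i : ℕ) : ℕ := (parts m).getD i 0

/-- Partial sum of the `k` largest parts. -/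
def psum (m : Multiset ℕ) (k : ℕ) : ℕ := ∑ i ∈ Finset.range k, part m i

/-- Dominance order: every partial sum of `l` is at most that of `m`. -/
def Dom (l m : Multiset ℕ) : Prop := ∀ k, psum l k ≤ psum m k

/-- Strict dominance. -/
def StrictDom (l m : Multiset ℕ) : Prop := Dom l m ∧ l ≠ m

/-- Componentwise sum of two partitions (sorted part sequences added, zero padding). -/
def psAdd (l m : Multiset ℕ) : Multiset ℕ :=
  ((Multiset.range (Multiset.card l + Multiset.card m)).map
    (fun i => part l i + part m i)).filter (0 < ·)

/-- The transpose (conjugate) partition: the `j`-th column length `#{x ∈ m : x ≥ j+1}`. -/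
def transpose (m : Multiset ℕ) : Multiset ℕ :=
  ((Multiset.range m.sum).map
    (fun j => Multiset.card (m.filter (fun x => j + 1 ≤ x)))).filter (0 < ·)

/-- The partition `s(m; z) = (z^a, b)` where `m = a z + b`, `0 ≤ b < z`. -/
def sPart (m z : ℕ) : Multiset ℕ :=
  Multiset.replicate (m / z) z + (if m % z = 0 then 0 else {m % z})

/-- `d_com^{(z)}(p) = Σ_i s(p_i; z)` (componentwise partition sum). -/
def dcom (z : ℕ) (p : Multiset ℕ) : Multiset ℕ :=
  (parts p).foldr (fun x acc => psAdd (sPart x z) acc) 0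

/-- A multiset is a partition when all its parts are positive. -/
def IsPartition (m : Multiset ℕ) : Prop := ∀ x ∈ m, 0 < x


-- basic lemmas
lemma parts_coe (m : Multiset ℕ) : (↑(parts m) : Multiset ℕ) = m := by
  simp [parts]

lemma parts_length (m : Multiset ℕ) : (parts m).length = Multiset.card m := by
  simp [parts]

lemma parts_sorted (m : Multiset ℕ) : (parts m).Pairwise (fun a b => b ≤ a) := by
  have := Multiset.pairwise_sort m (· ≤ ·)
  simpa [parts, List.pairwise_reverse] using this

lemma part_eq_zero (m : Multiset ℕ) {i : ℕ} (h : Multiset.card m ≤ i) : part m i = 0 := by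
  rw [part, List.getD_eq_default]
  rw [parts_length]; exact h

lemma part_antitone (m : Multiset ℕ) {i j : ℕ} (h : i ≤ j) : part m j ≤ part m i := by
  rcases eq_or_lt_of_le h with rfl | hij
  · exact le_rfl
  by_cases hj : j < (parts m).length
  · have hi : i < (parts m).length := Nat.lt_of_le_of_lt h hj
    have := (List.pairwise_iff_get.mp (parts_sorted m)) ⟨i, hi⟩ ⟨j, hj⟩ hij
    rw [part, part, List.getD_eq_getElem _ _ hi, List.getD_eq_getElem _ _ hj]
    simpa [List.get_eq_getElem] using this
  · rw [part, List.getD_eq_default _ _ (by omega)]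
    exact Nat.zero_le _

lemma part_mem (m : Multiset ℕ) {i : ℕ} (h : i < Multiset.card m) : part m i ∈ m := by
  have h' : i < (parts m).length := by rwa [parts_length]
  rw [part, List.getD_eq_getElem _ _ h']
  have h2 : (parts m)[i] ∈ parts m := List.getElem_mem _
  have h3 : (parts m)[i] ∈ (↑(parts m) : Multiset ℕ) := Multiset.mem_coe.mpr h2
  rwa [parts_coe m] at h3

lemma part_pos {m : Multiset ℕ} (hm : IsPartition m) {i : ℕ} (h : i < Multiset.card m) :
    0 < part m i := hm _ (part_mem m h)

lemma psum_succ (m : Multiset ℕ) (k : ℕ) : psum m (k + 1) = psum m k + part m k :=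
  Finset.sum_range_succ _ _

-- unique sorted representation
lemma parts_unique {L : List ℕ} {m : Multiset ℕ} (hL : L.Pairwise (fun a b => b ≤ a))
    (hperm : (↑L : Multiset ℕ) = m) : parts m = L := by
  have h1 : (m.sort (· ≤ ·)) = L.reverse := by
    apply List.Perm.eq_of_pairwise' (r := (· ≤ ·))
    rotate_right
    · have : (↑(m.sort (· ≤ ·)) : Multiset ℕ) = ↑L.reverse := by
        rw [Multiset.sort_eq, ← hperm]; simp
      exact Quotient.exact this
    · exact Multiset.pairwise_sort _ _
    · simpa [List.pairwise_reverse] using hL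
  simp [parts, h1]

-- list sum as index sum
lemma list_sum_map (g : ℕ → ℕ) (L : List ℕ) :
    (L.map g).sum = ∑ i ∈ Finset.range L.length, g (L.getD i 0) := by
  induction L with
  | nil => simp
  | cons a L ih =>
    rw [List.map_cons, List.sum_cons, ih, List.length_cons, Finset.sum_range_succ']
    simp [List.getD]
    ring

lemma sum_map_eq (m : Multiset ℕ) (g : ℕ → ℕ) :
    (m.map g).sum = ∑ i ∈ Finset.range (Multiset.card m), g (part m i) := by
  conv_lhs => rw [← parts_coe m]
  rw [Multiset.map_coe, Multiset.sum_coe, list_sum_map, parts_length]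
  rfl

lemma sum_map_eq' (m : Multiset ℕ) (g : ℕ → ℕ) (hg : g 0 = 0) {N : ℕ}
    (hN : Multiset.card m ≤ N) :
    (m.map g).sum = ∑ i ∈ Finset.range N, g (part m i) := by
  rw [sum_map_eq]
  apply Finset.sum_subset
  · exact Finset.range_subset_range.mpr hN
  · intro i _ hi
    rw [part_eq_zero m (by simpa using hi), hg]

lemma psum_eq_sum {m : Multiset ℕ} {k : ℕ} (hk : Multiset.card m ≤ k) : psum m k = m.sum := by
  have : m.sum = (m.map id).sum := by simp
  rw [this, sum_map_eq' m id rfl hk]; rfl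

-- downward closed sets
lemma dc_iff (S : Finset ℕ) (h : ∀ i j : ℕ, i ≤ j → j ∈ S → i ∈ S) (i : ℕ) :
    i ∈ S ↔ i < S.card := by
  constructor
  · intro hi
    by_contra hc
    push_neg at hc
    have : Finset.range (i + 1) ⊆ S := by
      intro j hj
      exact h j i (by simpa using Nat.lt_succ_iff.mp (Finset.mem_range.mp hj)) hi
    have := Finset.card_le_card this
    simp at this; omega
  · intro hi
    by_contra hc
    have : S ⊆ Finset.range i := by
      intro j hj
      by_contra hj'
      exact hc (h i j (by simpa using hj') hj)
    have := Finset.card_le_card this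
    simp at this; omega

lemma antitone_filter (f : ℕ → ℕ) (hf : ∀ i j : ℕ, i ≤ j → f j ≤ f i) (n t : ℕ)
    (h0 : ∀ i, n ≤ i → f i ≤ t) (i : ℕ) :
    t < f i ↔ i < ((Finset.range n).filter (fun i => t < f i)).card := by
  set S := (Finset.range n).filter (fun i => t < f i) with hS
  have hdc : ∀ i j : ℕ, i ≤ j → j ∈ S → i ∈ S := by
    intro i j hij hj
    rw [hS, Finset.mem_filter, Finset.mem_range] at *
    exact ⟨by omega, lt_of_lt_of_le hj.2 (hf i j hij)⟩
  rw [← dc_iff S hdc i, hS, Finset.mem_filter, Finset.mem_range]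
  constructor
  · intro h
    refine ⟨?_, h⟩
    by_contra hn
    exact absurd (h0 i (by omega)) (by omega)
  · exact fun h => h.2

-- columns
def C (m : Multiset ℕ) (j : ℕ) : ℕ := Multiset.card (m.filter (fun x => j < x))
def F (m : Multiset ℕ) (t : ℕ) : ℕ := (m.map (fun x => min x t)).sum

lemma card_filter_range (n : ℕ) (φ : ℕ → Prop) [DecidablePred φ] :
    ((Finset.range n).filter φ).card = ∑ i ∈ Finset.range n, if φ i then 1 else 0 := by
  rw [Finset.card_filter]

lemma C_eq (m : Multiset ℕ) (j : ℕ) :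
    C m j = ((Finset.range (Multiset.card m)).filter (fun i => j < part m i)).card := by
  have h1 : C m j = (m.map (fun x => if j < x then 1 else 0)).sum := by
    rw [C]
    induction m using Multiset.induction with
    | empty => simp
    | cons a s ih =>
      by_cases h : j < a <;> simp [Multiset.filter_cons, h, ih] <;> omega
  rw [h1, sum_map_eq, card_filter_range]

lemma range_filter_lt (c k : ℕ) (φ : ℕ → Prop) [DecidablePred φ] (hφ : ∀ i, φ i ↔ i < c) :
    ((Finset.range k).filter φ).card = min c k := by
  have : (Finset.range k).filter φ = Finset.range (min c k) := by
    ext i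
    simp only [Finset.mem_filter, Finset.mem_range, hφ]
    omega
  rw [this, Finset.card_range]

lemma card_filter_lt_part (m : Multiset ℕ) (j k : ℕ) :
    ((Finset.range k).filter (fun i => j < part m i)).card = min (C m j) k := by
  apply range_filter_lt
  intro i
  rw [C_eq]
  exact antitone_filter (part m) (fun i j h => part_antitone m h) (Multiset.card m) j
    (fun i hi => by rw [part_eq_zero m hi]; omega) i

lemma min_eq_indsum {x t : ℕ} (h : x ≤ t) : x = ∑ j ∈ Finset.range t, if j < x then 1 else 0 := by
  rw [← card_filter_range]
  rw [range_filter_lt x t _ (fun i => Iff.rfl)]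
  omega

lemma psum_eq_sum_min (m : Multiset ℕ) (k : ℕ) {B : ℕ} (hB : ∀ x ∈ m, x ≤ B) :
    psum m k = ∑ j ∈ Finset.range B, min (C m j) k := by
  have hpart : ∀ i, part m i ≤ B := by
    intro i
    by_cases h : i < Multiset.card m
    · exact hB _ (part_mem m h)
    · rw [part_eq_zero m (by omega)]; omega
  calc psum m k = ∑ i ∈ Finset.range k, ∑ j ∈ Finset.range B, if j < part m i then 1 else 0 := by
        apply Finset.sum_congr rfl
        intro i _
        exact min_eq_indsum (hpart i)
    _ = ∑ j ∈ Finset.range B, ∑ i ∈ Finset.range k, if j < part m i then 1 else 0 :=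
        Finset.sum_comm
    _ = ∑ j ∈ Finset.range B, min (C m j) k := by
        apply Finset.sum_congr rfl
        intro j _
        rw [← card_filter_range, card_filter_lt_part]

lemma F_eq_sum_C (m : Multiset ℕ) (t : ℕ) : F m t = ∑ j ∈ Finset.range t, C m j := by
  calc F m t = ∑ i ∈ Finset.range (Multiset.card m), min (part m i) t := sum_map_eq m _
    _ = ∑ i ∈ Finset.range (Multiset.card m), ∑ j ∈ Finset.range t,
          if j < part m i then 1 else 0 := by
        apply Finset.sum_congr rfl
        intro i _
        conv_lhs => rw [min_eq_indsum (min_le_right (part m i) t)]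
        refine Finset.sum_congr rfl fun j hj => ?_
        simp only [Finset.mem_range] at hj
        have h2 : (j < min (part m i) t) ↔ j < part m i := by omega
        simp only [h2]
    _ = ∑ j ∈ Finset.range t, ∑ i ∈ Finset.range (Multiset.card m),
          if j < part m i then 1 else 0 := Finset.sum_comm
    _ = ∑ j ∈ Finset.range t, C m j := by
        apply Finset.sum_congr rfl
        intro j _
        rw [← card_filter_range, ← C_eq]

-- psAdd
lemma isPartition_psAdd (l m : Multiset ℕ) : IsPartition (psAdd l m) :=
  fun _ hx => Multiset.of_mem_filter hx

lemma psum_psAdd (l m : Multiset ℕ) (k : ℕ) :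
    psum (psAdd l m) k = psum l k + psum m k := by
  set n := Multiset.card l + Multiset.card m with hn
  set f : ℕ → ℕ := fun i => part l i + part m i with hf
  have hanti : ∀ i j : ℕ, i ≤ j → f j ≤ f i :=
    fun i j h => Nat.add_le_add (part_antitone l h) (part_antitone m h)
  have hzero : ∀ i, n ≤ i → f i = 0 := by
    intro i hi
    have h1 : Multiset.card l ≤ i := by omega
    have h2 : Multiset.card m ≤ i := by omega
    simp [hf, part_eq_zero l h1, part_eq_zero m h2]
  set c := ((Finset.range n).filter (fun i => 0 < f i)).card with hc
  have hiff : ∀ i, 0 < f i ↔ i < c :=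
    antitone_filter f hanti n 0 (fun i hi => by rw [hzero i hi])
  have hcn : c ≤ n := le_trans (Finset.card_filter_le _ _) (by simp)
  have hlist : (List.range n).filter (fun i => decide (0 < f i)) = List.range c := by
    rw [show n = c + (n - c) by omega, List.range_add, List.filter_append]
    have h1 : (List.range c).filter (fun i => decide (0 < f i)) = List.range c := by
      rw [List.filter_eq_self]
      intro a ha
      simp only [List.mem_range] at ha
      simpa using (hiff a).mpr ha
    have h2 : (((List.range (n - c)).map (c + ·)).filter (fun i => decide (0 < f i))) = [] := by
      rw [List.filter_eq_nil_iff]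
      intro a ha
      simp only [List.mem_map, List.mem_range] at ha
      obtain ⟨b, hb, rfl⟩ := ha
      simp only [decide_eq_true_eq]
      have := hiff (c + b)
      omega
    rw [h1, h2, List.append_nil]
  have hps : psAdd l m = ↑((List.range c).map f) := by
    rw [psAdd, ← hn, ← Multiset.coe_range, Multiset.map_coe, Multiset.filter_coe,
      List.filter_map, ← hlist]
    rfl
  have hsorted : ((List.range c).map f).Pairwise (fun a b => b ≤ a) := by
    rw [List.pairwise_map]
    exact List.Pairwise.imp (fun h => hanti _ _ (le_of_lt h)) (List.pairwise_lt_range (n := c))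
  have hparts : parts (psAdd l m) = (List.range c).map f := parts_unique hsorted hps.symm
  have hpart : ∀ i, part (psAdd l m) i = f i := by
    intro i
    by_cases hi : i < c
    · rw [part, hparts, List.getD_eq_getElem _ _ (by simpa using hi)]
      simp
    · rw [part, List.getD_eq_default _ _ (by rw [hparts]; simpa using hi)]
      have := hiff i
      omega
  unfold psum
  rw [← Finset.sum_add_distrib]
  exact Finset.sum_congr rfl (fun i _ => hpart i)

-- sPart
lemma sum_sPart (x z : ℕ) : (sPart x z).sum = x := by
  have h := Nat.div_add_mod x z
  have hcomm : x / z * z = z * (x / z) := Nat.mul_comm _ _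
  by_cases hb : x % z = 0 <;>
    simp [sPart, hb, Multiset.sum_replicate, smul_eq_mul] <;> omega

lemma isPartition_sPart {z : ℕ} (hz : 1 ≤ z) (x : ℕ) : IsPartition (sPart x z) := by
  intro y hy
  rw [sPart] at hy
  rcases Multiset.mem_add.mp hy with h | h
  · rw [Multiset.eq_of_mem_replicate h]; omega
  · by_cases hb : x % z = 0
    · simp [hb] at h
    · simp [hb] at h
      subst h
      omega

lemma parts_sPart {z : ℕ} (hz : 1 ≤ z) (x : ℕ) :
    parts (sPart x z) =
      List.replicate (x / z) z ++ (if x % z = 0 then [] else [x % z]) := by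
  apply parts_unique
  · rw [List.pairwise_append]
    refine ⟨?_, ?_, ?_⟩
    · exact List.pairwise_replicate.mpr (Or.inr le_rfl)
    · by_cases hb : x % z = 0 <;> simp [hb]
    · intro a ha y hy
      rw [List.eq_of_mem_replicate ha]
      by_cases hb : x % z = 0 <;> simp [hb] at hy
      rw [hy]
      have := Nat.mod_lt x (show 0 < z by omega)
      omega
  · by_cases hb : x % z = 0 <;>
      simp [sPart, hb, ← Multiset.coe_replicate, ← Multiset.coe_add]

lemma part_sPart {z : ℕ} (hz : 1 ≤ z) (x k : ℕ) :
    part (sPart x z) k = min z (x - z * k) := by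
  have hb : x % z < z := Nat.mod_lt x (by omega)
  have hab : z * (x / z) + x % z = x := Nat.div_add_mod x z
  rw [part, parts_sPart hz]
  rcases lt_trichotomy k (x / z) with hk | hk | hk
  · have hlen : k < (List.replicate (x / z) z ++
        (if x % z = 0 then [] else [x % z])).length := by
      simp; omega
    rw [List.getD_eq_getElem _ _ hlen, List.getElem_append_left (by simpa using hk)]
    have h1 : z * (k + 1) ≤ z * (x / z) := Nat.mul_le_mul_left z (by omega)
    have h2 : z * (k + 1) = z * k + z := by ring
    simp only [List.getElem_replicate]
    omega
  · subst hk
    by_cases hb0 : x % z = 0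
    · rw [List.getD_eq_default _ _ (by simp [hb0])]
      omega
    · have hlen : x / z < (List.replicate (x / z) z ++
          (if x % z = 0 then [] else [x % z])).length := by
        simp [hb0]
      rw [List.getD_eq_getElem _ _ hlen, List.getElem_append_right (by simp)]
      simp [hb0]
      omega
  · rw [List.getD_eq_default]
    · have h1 : z * (x / z + 1) ≤ z * k := Nat.mul_le_mul_left z (by omega)
      have h2 : z * (x / z + 1) = z * (x / z) + z := by ring
      omega
    · by_cases hb0 : x % z = 0 <;> simp [hb0] <;> omega

lemma psum_sPart {z : ℕ} (hz : 1 ≤ z) (x k : ℕ) :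
    psum (sPart x z) k = min x (z * k) := by
  induction k with
  | zero => simp [psum]
  | succ k ih =>
    rw [psum_succ, ih, part_sPart hz]
    have h2 : z * (k + 1) = z * k + z := by ring
    omega

-- dcom
lemma psum_zero_multiset (k : ℕ) : psum (0 : Multiset ℕ) k = 0 := by
  have : ∀ i, part (0 : Multiset ℕ) i = 0 := by
    intro i
    apply part_eq_zero
    simp
  simp [psum, this]

lemma isPartition_dcom (z : ℕ) (m : Multiset ℕ) : IsPartition (dcom z m) := by
  rw [dcom]
  generalize parts m = L
  induction L with
  | nil => intro x hx; simp at hx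
  | cons a L ih => exact isPartition_psAdd _ _

lemma sum_psAdd (l m : Multiset ℕ) : (psAdd l m).sum = l.sum + m.sum := by
  set K := max (Multiset.card (psAdd l m)) (max (Multiset.card l) (Multiset.card m)) with hK
  rw [← psum_eq_sum (show Multiset.card (psAdd l m) ≤ K by omega),
    psum_psAdd, psum_eq_sum (show Multiset.card l ≤ K by omega),
    psum_eq_sum (show Multiset.card m ≤ K by omega)]

lemma sum_dcom (z : ℕ) (m : Multiset ℕ) : (dcom z m).sum = m.sum := by
  have hm : m.sum = (parts m).sum := by
    conv_lhs => rw [← parts_coe m]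
    rw [Multiset.sum_coe]
  rw [dcom, hm]
  generalize parts m = L
  induction L with
  | nil => simp
  | cons a L ih =>
    rw [List.foldr_cons, sum_psAdd, ih, List.sum_cons, sum_sPart]

lemma psum_dcom {z : ℕ} (hz : 1 ≤ z) (m : Multiset ℕ) (k : ℕ) :
    psum (dcom z m) k = F m (z * k) := by
  have hF : F m (z * k) = ((parts m).map (fun x => min x (z * k))).sum := by
    rw [F]
    conv_lhs => rw [← parts_coe m]
    rw [Multiset.map_coe, Multiset.sum_coe]
  rw [dcom, hF]
  generalize parts m = L
  induction L with
  | nil => simp [psum_zero_multiset]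
  | cons a L ih =>
    rw [List.foldr_cons, psum_psAdd, ih, List.map_cons, List.sum_cons, psum_sPart hz]

-- F + truncated-sub sum = total
lemma F_add_T (m : Multiset ℕ) (t : ℕ) :
    F m t + (m.map (fun x => x - t)).sum = m.sum := by
  rw [F]
  induction m using Multiset.induction with
  | empty => simp
  | cons a s ih => simp only [Multiset.map_cons, Multiset.sum_cons]; omega

lemma F_le {p p' : Multiset ℕ} (hDom : Dom p p') (hsum : p'.sum = p.sum) (t : ℕ) :
    F p' t ≤ F p t := by
  set n := Multiset.card p with hn
  set c := ((Finset.range n).filter (fun i => t < part p i)).card with hc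
  have hiff : ∀ i, t < part p i ↔ i < c :=
    antitone_filter (part p) (fun i j h => part_antitone p h) n t
      (fun i hi => by rw [part_eq_zero p hi]; omega)
  have hcn : c ≤ n := le_trans (Finset.card_filter_le _ _) (by simp)
  have hTp : (p.map (fun x => x - t)).sum + t * c = psum p c := by
    rw [sum_map_eq p _]
    rw [← Finset.sum_subset (Finset.range_subset_range.mpr hcn)
      (fun i _ hi => by
        have := hiff i
        simp only [Finset.mem_range] at hi
        omega)]
    rw [psum]
    have ht : t * c = ∑ _i ∈ Finset.range c, t := by
      rw [Finset.sum_const, Finset.card_range, smul_eq_mul, mul_comm]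
    rw [ht, ← Finset.sum_add_distrib]
    exact Finset.sum_congr rfl (fun i hi => by
      have := (hiff i).mpr (Finset.mem_range.mp hi)
      omega)
  have hTp' : psum p' c ≤ (p'.map (fun x => x - t)).sum + t * c := by
    set N := max c (Multiset.card p') with hN
    rw [sum_map_eq' p' _ (by omega) (show Multiset.card p' ≤ N by omega)]
    have h1 : psum p' c ≤ ∑ i ∈ Finset.range c, ((part p' i - t) + t) :=
      Finset.sum_le_sum (fun i _ => by omega)
    have h2 : ∑ i ∈ Finset.range c, ((part p' i - t) + t)
        = (∑ i ∈ Finset.range c, (part p' i - t)) + t * c := by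
      rw [Finset.sum_add_distrib, Finset.sum_const, Finset.card_range, smul_eq_mul, mul_comm]
    have h3 : ∑ i ∈ Finset.range c, (part p' i - t) ≤ ∑ i ∈ Finset.range N, (part p' i - t) :=
      Finset.sum_le_sum_of_subset (Finset.range_subset_range.mpr (by omega))
    omega
  have hd := hDom c
  have h1 := F_add_T p t
  have h2 := F_add_T p' t
  omega

-- helper: block sums
lemma sum_blocks (z : ℕ) (g : ℕ → ℕ) (N : ℕ) :
    ∑ i ∈ Finset.range N, ∑ j ∈ Finset.Ico (z * i) (z * i + z), g j
      = ∑ j ∈ Finset.range (z * N), g j := by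
  induction N with
  | zero => simp
  | succ N ih =>
    rw [Finset.sum_range_succ, ih]
    have h1 : z * (N + 1) = z * N + z := by ring
    rw [h1, Finset.range_eq_Ico, Finset.range_eq_Ico]
    exact Finset.sum_Ico_consecutive g (Nat.zero_le (z * N)) (Nat.le_add_right _ z)

lemma part_dcom {z : ℕ} (hz : 1 ≤ z) (m : Multiset ℕ) (i : ℕ) :
    part (dcom z m) i = ∑ j ∈ Finset.Ico (z * i) (z * i + z), C m j := by
  have h1 := psum_succ (dcom z m) i
  rw [psum_dcom hz, psum_dcom hz, F_eq_sum_C, F_eq_sum_C] at h1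
  have h2 : z * (i + 1) = z * i + z := by ring
  rw [h2] at h1
  have h3 : ∑ j ∈ Finset.range (z * i + z), C m j
      = (∑ j ∈ Finset.range (z * i), C m j)
        + ∑ j ∈ Finset.Ico (z * i) (z * i + z), C m j := by
    rw [Finset.range_eq_Ico, Finset.range_eq_Ico]
    exact (Finset.sum_Ico_consecutive (C m) (Nat.zero_le (z * i)) (Nat.le_add_right _ z)).symm
  omega

lemma le_dcom2 {z : ℕ} (hz : 1 ≤ z) (m : Multiset ℕ) (k : ℕ) :
    psum m k ≤ F (dcom z m) (z * k) := by
  set B := m.sum with hB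
  have hBm : ∀ x ∈ m, x ≤ B := fun x hx => Multiset.le_sum_of_mem hx
  set N := max B (Multiset.card (dcom z m)) with hN
  have hBN : B ≤ z * N := by
    calc B ≤ N := by omega
      _ = 1 * N := (one_mul N).symm
      _ ≤ z * N := Nat.mul_le_mul_right N hz
  have hmain : F (dcom z m) (z * k)
      = ∑ i ∈ Finset.range N, min (part (dcom z m) i) (z * k) :=
    sum_map_eq' _ _ (by simp) (by omega)
  have hper : ∀ i, ∑ j ∈ Finset.Ico (z * i) (z * i + z), min (C m j) k
      ≤ min (part (dcom z m) i) (z * k) := by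
    intro i
    apply le_min
    · rw [part_dcom hz]
      exact Finset.sum_le_sum (fun j _ => min_le_left _ _)
    · calc ∑ j ∈ Finset.Ico (z * i) (z * i + z), min (C m j) k
          ≤ ∑ _j ∈ Finset.Ico (z * i) (z * i + z), k :=
            Finset.sum_le_sum (fun j _ => min_le_right _ _)
        _ = z * k := by rw [Finset.sum_const, Nat.Ico_eq_range', smul_eq_mul]; simp
  calc psum m k = ∑ j ∈ Finset.range B, min (C m j) k := psum_eq_sum_min m k hBm
    _ ≤ ∑ j ∈ Finset.range (z * N), min (C m j) k :=
        Finset.sum_le_sum_of_subset (Finset.range_subset_range.mpr hBN)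
    _ = ∑ i ∈ Finset.range N, ∑ j ∈ Finset.Ico (z * i) (z * i + z), min (C m j) k :=
        (sum_blocks z _ N).symm
    _ ≤ ∑ i ∈ Finset.range N, min (part (dcom z m) i) (z * k) :=
        Finset.sum_le_sum (fun i _ => hper i)
    _ = F (dcom z m) (z * k) := hmain.symm

-- antisymmetry
lemma psum_inj {p p' : Multiset ℕ} (hp : IsPartition p) (hp' : IsPartition p')
    (h : ∀ k, psum p k = psum p' k) : p = p' := by
  have hpart : ∀ i, part p i = part p' i := by
    intro i
    have h1 := psum_succ p i
    have h2 := psum_succ p' i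
    have h3 := h i
    have h4 := h (i + 1)
    omega
  have hc1 : Multiset.card p ≤ Multiset.card p' := by
    by_contra hlt
    push_neg at hlt
    have hpos := part_pos hp hlt
    have hzero := part_eq_zero p' (le_refl (Multiset.card p'))
    rw [← hpart _] at hzero
    omega
  have hc2 : Multiset.card p' ≤ Multiset.card p := by
    by_contra hlt
    push_neg at hlt
    have hpos := part_pos hp' hlt
    have hzero := part_eq_zero p (le_refl (Multiset.card p))
    rw [hpart _] at hzero
    omega
  have hlen : (parts p).length = (parts p').length := by
    rw [parts_length, parts_length]
    omega
  have hlists : parts p = parts p' := by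
    apply List.ext_getElem hlen
    intro i h1 h2
    have := hpart i
    rwa [part, part, List.getD_eq_getElem _ _ h1, List.getD_eq_getElem _ _ h2] at this
  rw [← parts_coe p, ← parts_coe p', hlists]


/-- if `p` lies in the image of `d_com^{(z)}` and `p' > p` in dominance order
(same total), then `d_com^{(z)}(p') < d_com^{(z)}(p)` strictly in dominance order. -/
theorem stmt9 (z : ℕ) (hz : 1 ≤ z) (p q p' : Multiset ℕ)
    (hq : IsPartition q) (hp' : IsPartition p')
    (hpq : p = dcom z q) (hsum : p'.sum = p.sum) (h : StrictDom p p') :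
    StrictDom (dcom z p') (dcom z p) := by
  obtain ⟨hDom, hne⟩ := h
  have hp : IsPartition p := hpq ▸ isPartition_dcom z q
  constructor
  · intro k
    rw [psum_dcom hz, psum_dcom hz]
    exact F_le hDom hsum (z * k)
  · intro heq
    apply hne
    have key : ∀ k, psum p k = psum p' k := by
      intro k
      have le1 : psum p' k ≤ F (dcom z p') (z * k) := le_dcom2 hz p' k
      rw [heq] at le1
      have hq2 : (dcom z (dcom z q)).sum = q.sum := by rw [sum_dcom, sum_dcom]
      have hDomq : Dom q (dcom z (dcom z q)) := by
        intro k'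
        have h5 := le_dcom2 hz q k'
        rwa [← psum_dcom hz (dcom z q) k'] at h5
      have le2 : F (dcom z (dcom z q)) (z * k) ≤ F q (z * k) := F_le hDomq hq2 (z * k)
      have le3 : F (dcom z p) (z * k) ≤ psum p k := by
        rw [hpq, psum_dcom hz q k]
        exact le2
      have h6 := hDom k
      omega
    exact psum_inj hp hp' key

end PartStmt
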